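/- ∑_{m=0}^∞ m·3·∫_0^1 (1-a)^3/(1+a)·(2a/(1+a))^m da = 6·∫_0^1 a(1-a) da = 1, i.e. the mean number of T-type vertices in the relative interior of the typical I-segment equals 1. -/

import Mathlib

open MeasureTheory Set
open scoped Interval

/-!
With `x = 2a/(1+a) ∈ [0, 1)` one has `1 - x = (1-a)/(1+a)`, so `∑ m m xᵐ = x/(1-x)²` turns the
series of integrands into the polynomial `6a(1-a)`. All terms are nonnegative, so the series
dominates itself and may be integrated term by term.
-/

theorem intervalIntegral.hasSum_integral_of_nonneg {ι : Type*} [Countable ι] {μ : Measure ℝ}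
    {a b : ℝ} {F : ι → ℝ → ℝ} {f : ℝ → ℝ}
    (hF_meas : ∀ n, AEStronglyMeasurable (F n) (μ.restrict (Ι a b)))
    (hF_nonneg : ∀ n, ∀ t ∈ Ι a b, 0 ≤ F n t) (h_lim : ∀ t ∈ Ι a b, HasSum (F · t) (f t))
    (hf : IntervalIntegrable f μ a b) :
    HasSum (fun n => ∫ t in a..b, F n t ∂μ) (∫ t in a..b, f t ∂μ) := by
  refine intervalIntegral.hasSum_integral_of_dominated_convergence F hF_meas
    (fun n => .of_forall fun t ht => (Real.norm_of_nonneg (hF_nonneg n t ht)).le)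
    (.of_forall fun t ht => (h_lim t ht).summable) ?_ (.of_forall h_lim)
  exact (intervalIntegrable_congr fun t ht => (h_lim t ht).tsum_eq.symm).mp hf

theorem nat_mul_T_vertex_density_nonneg {a : ℝ} (ha₀ : 0 ≤ a) (ha₁ : a ≤ 1) (m : ℕ) :
    0 ≤ (m : ℝ) * (3 * ((1 - a) ^ 3 / (1 + a) * (2 * a / (1 + a)) ^ m)) := by
  have : 0 ≤ 1 - a := by linarith
  positivity

theorem hasSum_nat_mul_T_vertex_density {a : ℝ} (ha₀ : 0 ≤ a) (ha₁ : a ≤ 1) :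
    HasSum (fun m : ℕ => (m : ℝ) * (3 * ((1 - a) ^ 3 / (1 + a) * (2 * a / (1 + a)) ^ m)))
      (6 * (a * (1 - a))) := by
  rcases ha₁.eq_or_lt with rfl | ha_lt
  · simp
  have hx : ‖2 * a / (1 + a)‖ < 1 := by
    rw [Real.norm_of_nonneg (by positivity), div_lt_one (by positivity)]
    linarith
  have hx_sub : 1 - 2 * a / (1 + a) = (1 - a) / (1 + a) := by field_simp; ring
  have h := (hasSum_coe_mul_geometric_of_norm_lt_one hx).mul_left (3 * ((1 - a) ^ 3 / (1 + a)))
  rw [hx_sub, show 3 * ((1 - a) ^ 3 / (1 + a)) * (2 * a / (1 + a) / ((1 - a) / (1 + a)) ^ 2)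
    = 6 * (a * (1 - a)) by field_simp; ring] at h
  exact h.congr_fun fun m => by ring

theorem integral_mul_one_sub_unitInterval : ∫ a in (0:ℝ)..1, a * (1 - a) = 1 / 6 := by
  simp only [mul_sub, mul_one, ← sq]
  rw [intervalIntegral.integral_sub intervalIntegral.intervalIntegrable_id
    (intervalIntegral.intervalIntegrable_pow 2)]
  norm_num

theorem stit_mean_T_vertices :
    (∑' m : ℕ, (m : ℝ) *
        (3 * ∫ a in (0:ℝ)..1, (1 - a) ^ 3 / (1 + a) * (2 * a / (1 + a)) ^ m)) =
      6 * (∫ a in (0:ℝ)..1, a * (1 - a)) ∧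
    6 * (∫ a in (0:ℝ)..1, a * (1 - a)) = 1 := by
  have hsum : HasSum
      (fun m : ℕ => ∫ a in (0:ℝ)..1, (m : ℝ) * (3 * ((1 - a) ^ 3 / (1 + a) * (2 * a / (1 + a)) ^ m)))
      (∫ a in (0:ℝ)..1, 6 * (a * (1 - a))) := by
    have hI : Ι (0:ℝ) 1 = Ioc 0 1 := uIoc_of_le zero_le_one
    refine intervalIntegral.hasSum_integral_of_nonneg
      (fun m => (by fun_prop : Measurable _).aestronglyMeasurable)
      (fun m t ht => ?_) (fun t ht => ?_) ((by fun_prop : Continuous _).intervalIntegrable 0 1)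
    all_goals rw [hI] at ht
    · exact nat_mul_T_vertex_density_nonneg ht.1.le ht.2 m
    · exact hasSum_nat_mul_T_vertex_density ht.1.le ht.2
  simp only [intervalIntegral.integral_const_mul] at hsum
  exact ⟨hsum.tsum_eq, by rw [integral_mul_one_sub_unitInterval]; norm_num⟩
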